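/- arXiv:1209.5348 — 8 statements merged into one kernel-verified Lean document; each statement's English description precedes it below -/
import Mathlib

section
/- Let F : [0, ∞) → ℝ be continuously differentiable with derivative f > 0, F(0) = 0, F(z) < 1 for all z, and suppose the hazard rate h(z) = f(z)/(1 − F(z)) is nondecreasing (monotone hazard rate). Let p_M > 0 satisfy p_M · h(p_M) = 1 (the first-order condition for the Myerson monopoly price). Then 1 − F(p_M) ≥ 1/e; equivalently, h(p_M) ≥ 1/(e · R_M), where R_M = p_M (1 − F(p_M)) is the Myerson revenue. -/
/-! The cumulative hazard `-log (1 - F)` vanishes at `0` and has derivative the hazard rate `h`.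
By monotonicity `h ≤ h(p_M) = 1 / p_M` on `[0, p_M]`, so the cumulative hazard at `p_M` is at
most `1`, that is `1 - F(p_M) ≥ e⁻¹`. -/

open Real Set

noncomputable def hazardRate (F f : ℝ → ℝ) (z : ℝ) : ℝ := f z / (1 - F z)

lemma hasDerivAt_neg_log_one_sub {F f : ℝ → ℝ} {z : ℝ} (hF : HasDerivAt F (f z) z)
    (hFz : F z < 1) : HasDerivAt (fun z => -log (1 - F z)) (hazardRate F f z) z := by
  have h := ((hasDerivAt_const z 1).sub hF).log (sub_pos.mpr hFz).ne'
  simpa [hazardRate, neg_div] using h.fun_neg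

lemma exp_neg_mul_le_one_sub_of_hazardRate_le {F f : ℝ → ℝ} {p c : ℝ} (hp : 0 ≤ p)
    (hderiv : ∀ z ∈ Icc 0 p, HasDerivAt F (f z) z) (hF0 : F 0 = 0)
    (hF1 : ∀ z ∈ Icc 0 p, F z < 1) (hle : ∀ z ∈ Icc 0 p, hazardRate F f z ≤ c) :
    exp (-(c * p)) ≤ 1 - F p := by
  have hG : ∀ z ∈ Icc 0 p, HasDerivAt (fun z => -log (1 - F z)) (hazardRate F f z) z :=
    fun z hz => hasDerivAt_neg_log_one_sub (hderiv z hz) (hF1 z hz)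
  have hcumul : -log (1 - F p) - -log (1 - F 0) ≤ c * (p - 0) := by
    refine (convex_Icc 0 p).image_sub_le_mul_sub_of_deriv_le
      (fun z hz => (hG z hz).continuousAt.continuousWithinAt)
      (fun z hz => (hG z (interior_subset hz)).differentiableAt.differentiableWithinAt)
      (fun z hz => (hG z (interior_subset hz)).deriv ▸ hle z (interior_subset hz))
      0 (left_mem_Icc.mpr hp) p (right_mem_Icc.mpr hp) hp
  have hpos : 0 < 1 - F p := sub_pos.mpr (hF1 p (right_mem_Icc.mpr hp))
  rw [hF0, sub_zero, log_one, neg_zero, sub_zero, sub_zero] at hcumul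
  calc exp (-(c * p)) ≤ exp (log (1 - F p)) := exp_le_exp.mpr (by linarith)
    _ = 1 - F p := exp_log hpos

theorem stmt_2_general (F f : ℝ → ℝ)
    (hderiv : ∀ z ∈ Set.Ici (0:ℝ), HasDerivAt F (f z) z)
    (hF0 : F 0 = 0)
    (hF1 : ∀ z ∈ Set.Ici (0:ℝ), F z < 1)
    (hMHR : ∀ x ∈ Set.Ici (0:ℝ), ∀ y ∈ Set.Ici (0:ℝ), x ≤ y →
      f x / (1 - F x) ≤ f y / (1 - F y))
    (pM : ℝ) (hpM : 0 < pM)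
    (hFOC : pM * (f pM / (1 - F pM)) = 1) :
    1 / Real.exp 1 ≤ 1 - F pM ∧
      1 / (Real.exp 1 * (pM * (1 - F pM))) ≤ f pM / (1 - F pM) := by
  have hhazard : hazardRate F f pM = 1 / pM := eq_one_div_of_mul_eq_one_right hFOC
  have hsurvival : exp (-(1 / pM * pM)) ≤ 1 - F pM :=
    exp_neg_mul_le_one_sub_of_hazardRate_le hpM.le (fun z hz => hderiv z hz.1) hF0
      (fun z hz => hF1 z hz.1)
      (fun z hz => hhazard ▸ hMHR z hz.1 pM (mem_Ici.mpr hpM.le) hz.2)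
  rw [one_div_mul_cancel hpM.ne', exp_neg, inv_eq_one_div] at hsurvival
  refine ⟨hsurvival, ?_⟩
  change _ ≤ hazardRate F f pM
  rw [hhazard]
  refine one_div_le_one_div_of_le hpM ?_
  have he : 1 ≤ exp 1 * (1 - F pM) := by
    rwa [div_le_iff₀' (exp_pos 1)] at hsurvival
  nlinarith

/-- For an MHR distribution, the survival probability at the Myerson price is at
least `1/e`; equivalently `h(p_M) ≥ 1/(e R_M)` with `R_M = p_M (1 - F(p_M))`. -/
theorem stmt_2 (F f : ℝ → ℝ)
    (hderiv : ∀ z ∈ Set.Ici (0:ℝ), HasDerivAt F (f z) z)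
    (hcont : ContinuousOn f (Set.Ici 0))
    (hfpos : ∀ z ∈ Set.Ici (0:ℝ), 0 < f z)
    (hF0 : F 0 = 0)
    (hF1 : ∀ z ∈ Set.Ici (0:ℝ), F z < 1)
    (hMHR : ∀ x ∈ Set.Ici (0:ℝ), ∀ y ∈ Set.Ici (0:ℝ), x ≤ y →
      f x / (1 - F x) ≤ f y / (1 - F y))
    (pM : ℝ) (hpM : 0 < pM)
    (hFOC : pM * (f pM / (1 - F pM)) = 1) :
    1 / Real.exp 1 ≤ 1 - F pM ∧
      1 / (Real.exp 1 * (pM * (1 - F pM))) ≤ f pM / (1 - F pM) :=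
  stmt_2_general F f hderiv hF0 hF1 hMHR pM hpM hFOC
end

section
/- Let F : [0, ∞) → ℝ be continuously differentiable with derivative f > 0, F(0) = 0, F < 1, with nondecreasing hazard rate h(z) = f(z)/(1 − F(z)), and let p_M > 0. Define the hybrid distribution F̃ by 1 − F̃(v) = exp(−∫₀^v h̃(u) du), where h̃(u) = h(u) for u ≤ p_M and h̃(u) = h(p_M) for u > p_M. Then 1 − F̃(v) ≥ 1 − F(v) for all v ≥ 0, and consequently, for every outside option R ≥ 0, sup_{p ≥ 0} (1 − F(p))(p − R) ≤ sup_{p ≥ 0} (1 − F̃(p))(p − R). -/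
/-!
Writing `h = f / (1 - F)`, the survival function is `1 - F v = exp (-∫₀^v h)`, since
`h = -(log (1 - F))'`. The hybrid hazard is `h (min u p_M)`, which by monotonicity of `h` is
at most `h u`; hence `1 - F̃ ≥ 1 - F`, and the revenue curve of `F̃` dominates that of `F`
wherever `p ≥ R`. Comparing suprema needs the revenue of `F̃` to be bounded above: its hazard
is at least `h 0 = f 0 > 0`, so `(1 - F̃ p) p ≤ p e^{-f(0) p} ≤ e⁻¹ / f 0`.
-/

open Set Real

/-- The hazard rate `h̃` of the hybrid distribution, for `h` the hazard rate of `F`. -/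
noncomputable def freezeAfter (h : ℝ → ℝ) (pM u : ℝ) : ℝ := if u ≤ pM then h u else h pM

section Hazard

variable {h : ℝ → ℝ} {pM : ℝ}

theorem freezeAfter_eq_comp_min (h : ℝ → ℝ) (pM : ℝ) :
    freezeAfter h pM = fun u => h (min u pM) := by
  ext u
  rcases le_or_gt u pM with hu | hu
  · simp [freezeAfter, hu]
  · simp [freezeAfter, hu.not_ge, hu.le]

theorem ContinuousOn.freezeAfter (hh : ContinuousOn h (Ici 0)) (hpM : 0 ≤ pM) :
    ContinuousOn (freezeAfter h pM) (Ici 0) := by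
  rw [freezeAfter_eq_comp_min]
  exact hh.comp (continuous_id.min continuous_const).continuousOn
    fun u hu => le_min hu hpM

theorem MonotoneOn.freezeAfter_le (hh : MonotoneOn h (Ici 0)) (hpM : 0 ≤ pM) {u : ℝ}
    (hu : 0 ≤ u) : freezeAfter h pM u ≤ h u := by
  rw [freezeAfter_eq_comp_min]
  exact hh (le_min hu hpM) hu (min_le_left u pM)

theorem MonotoneOn.le_freezeAfter (hh : MonotoneOn h (Ici 0)) (hpM : 0 ≤ pM) {u : ℝ}
    (hu : 0 ≤ u) : h 0 ≤ freezeAfter h pM u := by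
  rw [freezeAfter_eq_comp_min]
  exact hh self_mem_Ici (le_min hu hpM) (le_min hu hpM)

theorem integral_freezeAfter_le (hmono : MonotoneOn h (Ici 0)) (hcont : ContinuousOn h (Ici 0))
    (hpM : 0 ≤ pM) {v : ℝ} (hv : 0 ≤ v) :
    ∫ u in (0:ℝ)..v, freezeAfter h pM u ≤ ∫ u in (0:ℝ)..v, h u :=
  intervalIntegral.integral_mono_on hv
    ((hcont.freezeAfter hpM).mono Icc_subset_Ici_self |>.intervalIntegrable_of_Icc hv)
    ((hcont.mono Icc_subset_Ici_self).intervalIntegrable_of_Icc hv)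
    fun _ hu => hmono.freezeAfter_le hpM hu.1

theorem mul_le_integral_freezeAfter (hmono : MonotoneOn h (Ici 0))
    (hcont : ContinuousOn h (Ici 0)) (hpM : 0 ≤ pM) {v : ℝ} (hv : 0 ≤ v) :
    v * h 0 ≤ ∫ u in (0:ℝ)..v, freezeAfter h pM u :=
  calc v * h 0 = ∫ _ in (0:ℝ)..v, h 0 := by simp
    _ ≤ _ := intervalIntegral.integral_mono_on hv intervalIntegrable_const
      ((hcont.freezeAfter hpM).mono Icc_subset_Ici_self |>.intervalIntegrable_of_Icc hv)
      fun _ hu => hmono.le_freezeAfter hpM hu.1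

end Hazard

section Survival

variable {F f : ℝ → ℝ}

theorem continuousOn_hazard (hderiv : ∀ z ∈ Ici (0:ℝ), HasDerivAt F (f z) z)
    (hcont : ContinuousOn f (Ici 0)) (hF1 : ∀ z ∈ Ici (0:ℝ), F z < 1) :
    ContinuousOn (fun z => f z / (1 - F z)) (Ici 0) :=
  hcont.div (continuousOn_const.sub fun z hz => (hderiv z hz).continuousAt.continuousWithinAt)
    fun z hz => (sub_pos.2 (hF1 z hz)).ne'

theorem one_sub_eq_exp_neg_integral_hazard (hderiv : ∀ z ∈ Ici (0:ℝ), HasDerivAt F (f z) z)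
    (hcont : ContinuousOn f (Ici 0)) (hF0 : F 0 = 0) (hF1 : ∀ z ∈ Ici (0:ℝ), F z < 1)
    {v : ℝ} (hv : 0 ≤ v) :
    1 - F v = exp (-∫ u in (0:ℝ)..v, f u / (1 - F u)) := by
  have hpos : ∀ z ∈ Ici (0:ℝ), 0 < 1 - F z := fun z hz => sub_pos.2 (hF1 z hz)
  have hsub : uIcc 0 v ⊆ Ici (0:ℝ) := by rw [uIcc_of_le hv]; exact Icc_subset_Ici_self
  have hlog : ∫ u in (0:ℝ)..v, -(f u / (1 - F u)) = log (1 - F v) - log (1 - F 0) := by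
    refine intervalIntegral.integral_eq_sub_of_hasDerivAt (f := fun u => log (1 - F u))
      (fun z hz => ?_) ((continuousOn_hazard hderiv hcont hF1).mono hsub).neg.intervalIntegrable
    simpa [neg_div] using ((hderiv z (hsub hz)).const_sub 1).log (hpos z (hsub hz)).ne'
  rw [intervalIntegral.integral_neg, hF0, sub_zero, log_one, sub_zero] at hlog
  rw [hlog, exp_log (hpos v hv)]

end Survival

section Revenue

variable {S T : ℝ → ℝ} {R : ℝ}

theorem bddAbove_revenue_of_le_exp {c : ℝ} (hc : 0 < c) (hR : 0 ≤ R)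
    (hT0 : ∀ p ∈ Ici (0:ℝ), 0 ≤ T p) (hT : ∀ p ∈ Ici (0:ℝ), T p ≤ exp (-(c * p))) :
    BddAbove ((fun p => T p * (p - R)) '' Ici 0) := by
  refine ⟨exp (-1) / c, ?_⟩
  rintro _ ⟨p, hp, rfl⟩
  rw [le_div_iff₀ hc]
  have hp : (0:ℝ) ≤ p := hp
  calc T p * (p - R) * c ≤ T p * p * c := by gcongr; exacts [hT0 p hp, by linarith]
    _ ≤ exp (-(c * p)) * p * c := by gcongr; exact hT p hp
    _ = c * p * exp (-(c * p)) := by ring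
    _ ≤ exp (-1) := mul_exp_neg_le_exp_neg_one _

theorem sSup_revenue_le_of_le (hR : 0 ≤ R) (hS0 : ∀ p ∈ Ici (0:ℝ), 0 ≤ S p)
    (hST : ∀ p ∈ Ici (0:ℝ), S p ≤ T p) (hT : BddAbove ((fun p => T p * (p - R)) '' Ici 0)) :
    sSup ((fun p => S p * (p - R)) '' Ici 0) ≤ sSup ((fun p => T p * (p - R)) '' Ici 0) := by
  have hT_nonneg : 0 ≤ sSup ((fun p => T p * (p - R)) '' Ici 0) :=
    le_csSup hT ⟨R, hR, by simp⟩
  refine Real.sSup_le ?_ hT_nonneg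
  rintro _ ⟨p, hp, rfl⟩
  rcases le_or_gt R p with hRp | hpR
  · exact (mul_le_mul_of_nonneg_right (hST p hp) (sub_nonneg.2 hRp)).trans
      (le_csSup hT ⟨p, hp, rfl⟩)
  · exact (mul_nonpos_of_nonneg_of_nonpos (hS0 p hp) (by linarith)).trans hT_nonneg

end Revenue

/-- The hybrid distribution `F̃` (which keeps the hazard rate of `F` up to `p_M`
and freezes it at `h(p_M)` thereafter) stochastically dominates `F`, hence its
optimal incremental revenue is at least that of `F` for every outside option. -/
theorem stmt_3 (F f : ℝ → ℝ)
    (hderiv : ∀ z ∈ Set.Ici (0:ℝ), HasDerivAt F (f z) z)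
    (hcont : ContinuousOn f (Set.Ici 0))
    (hfpos : ∀ z ∈ Set.Ici (0:ℝ), 0 < f z)
    (hF0 : F 0 = 0)
    (hF1 : ∀ z ∈ Set.Ici (0:ℝ), F z < 1)
    (hMHR : ∀ x ∈ Set.Ici (0:ℝ), ∀ y ∈ Set.Ici (0:ℝ), x ≤ y →
      f x / (1 - F x) ≤ f y / (1 - F y))
    (pM : ℝ) (hpM : 0 < pM)
    (Ft : ℝ → ℝ)
    (hFt : ∀ v, Ft v = 1 - Real.exp (-∫ u in (0:ℝ)..v,
      if u ≤ pM then f u / (1 - F u) else f pM / (1 - F pM))) :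
    (∀ v ∈ Set.Ici (0:ℝ), 1 - F v ≤ 1 - Ft v) ∧
      ∀ R ∈ Set.Ici (0:ℝ),
        sSup ((fun p => (1 - F p) * (p - R)) '' Set.Ici 0) ≤
          sSup ((fun p => (1 - Ft p) * (p - R)) '' Set.Ici 0) := by
  set h : ℝ → ℝ := fun z => f z / (1 - F z) with h_def
  have hh_cont : ContinuousOn h (Ici 0) := continuousOn_hazard hderiv hcont hF1
  have hh_mono : MonotoneOn h (Ici 0) := fun x hx y hy hxy => hMHR x hx y hy hxy
  have hFt_surv : ∀ v, 1 - Ft v = exp (-∫ u in (0:ℝ)..v, freezeAfter h pM u) := fun v => by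
    rw [hFt v, sub_sub_cancel]; rfl
  have hdom : ∀ v ∈ Ici (0:ℝ), 1 - F v ≤ 1 - Ft v := fun v hv => by
    rw [hFt_surv, one_sub_eq_exp_neg_integral_hazard hderiv hcont hF0 hF1 hv]
    exact exp_le_exp.2 (neg_le_neg (integral_freezeAfter_le hh_mono hh_cont hpM.le hv))
  have hFt_tail : ∀ p ∈ Ici (0:ℝ), 1 - Ft p ≤ exp (-(h 0 * p)) := fun p hp => by
    rw [hFt_surv, mul_comm]
    exact exp_le_exp.2 (neg_le_neg (mul_le_integral_freezeAfter hh_mono hh_cont hpM.le hp))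
  have hh0 : 0 < h 0 := by simpa [h_def, hF0] using hfpos 0 self_mem_Ici
  refine ⟨hdom, fun R hR => sSup_revenue_le_of_le hR (fun p hp => sub_nonneg.2 (hF1 p hp).le)
    hdom (bddAbove_revenue_of_le_exp hh0 hR (fun p _ => ?_) hFt_tail)⟩
  rw [hFt_surv]
  positivity
end

section
/- Let F : [0, ∞) → ℝ be continuously differentiable with derivative f > 0, F(0) = 0, F < 1, with nondecreasing hazard rate h(z) = f(z)/(1 − F(z)), and let p_M > 0 satisfy p_M · h(p_M) = 1. Define the hybrid distribution F̃ by 1 − F̃(v) = exp(−∫₀^v h̃(u) du), where h̃(u) = h(u) for u ≤ p_M and h̃(u) = h(p_M) for u > p_M. Then for every R ≥ 0, sup_{p ≥ 0} (1 − F̃(p))(p − R) = R_M · e^{−R · h(p_M)}, where R_M = p_M(1 − F(p_M)), and the supremum is attained at η̃ = R + p_M. -/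
/-! The hybrid survival function is `exp (-H)` with `H v = ∫₀^v h (min u p_M)`. By MHR the hybrid
hazard never exceeds `c = h p_M`, and it equals `c` beyond `p_M`, so `H v - c v` is minimal at every
`η ≥ p_M`. Hence at any price `p` the survival is at most `S(η) e^{-c (p - η)}`, and the revenue of
this exponential tail, essentially `t e^{-c t}` with `t = p - R`, peaks at `t = 1/c = p_M`. -/

open Real Set intervalIntegral

theorem continuousOn_hazardRate {F f : ℝ → ℝ} {s : Set ℝ}
    (hderiv : ∀ z ∈ s, HasDerivAt F (f z) z) (hcont : ContinuousOn f s)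
    (hF1 : ∀ z ∈ s, F z < 1) : ContinuousOn (fun z => f z / (1 - F z)) s :=
  hcont.div (continuousOn_const.sub fun z hz => (hderiv z hz).continuousAt.continuousWithinAt)
    fun z hz => (sub_pos.2 (hF1 z hz)).ne'

theorem integral_hazardRate_eq_log_sub {F f : ℝ → ℝ} {a b : ℝ} (hab : a ≤ b)
    (hderiv : ∀ z ∈ Icc a b, HasDerivAt F (f z) z) (hcont : ContinuousOn f (Icc a b))
    (hF1 : ∀ z ∈ Icc a b, F z < 1) :
    ∫ u in a..b, f u / (1 - F u) = log (1 - F a) - log (1 - F b) := by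
  rw [integral_eq_sub_of_hasDerivAt (f := fun z => -log (1 - F z))]
  · ring
  · intro z hz
    rw [uIcc_of_le hab] at hz
    exact (((hderiv z hz).const_sub 1).log (sub_pos.2 (hF1 z hz)).ne').neg.congr_deriv (by ring)
  · exact (continuousOn_hazardRate hderiv hcont hF1).intervalIntegrable_of_Icc hab

section
variable {k : ℝ → ℝ} {a b c p : ℝ}

theorem intervalIntegrable_of_continuousOn_Ici (hk : ContinuousOn k (Ici a)) {x y : ℝ}
    (hx : a ≤ x) (hy : a ≤ y) : IntervalIntegrable k MeasureTheory.volume x y :=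
  (hk.mono fun _ hu => (le_min hx hy).trans hu.1).intervalIntegrable

theorem integral_eq_integral_add_mul_sub (hk : ContinuousOn k (Ici a))
    (heq : ∀ u ∈ Ici b, k u = c) (hab : a ≤ b) (hbp : b ≤ p) :
    ∫ u in a..p, k u = (∫ u in a..b, k u) + c * (p - b) := by
  rw [← integral_add_adjacent_intervals (intervalIntegrable_of_continuousOn_Ici hk le_rfl hab)
    (intervalIntegrable_of_continuousOn_Ici hk hab (hab.trans hbp)),
    integral_congr (a := b) (b := p) (g := fun _ => c) fun u hu => heq u (uIcc_of_le hbp ▸ hu).1,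
    integral_const, smul_eq_mul, mul_comm]

theorem integral_add_mul_sub_le_integral (hk : ContinuousOn k (Ici a))
    (hle : ∀ u ∈ Ici a, k u ≤ c) (heq : ∀ u ∈ Ici b, k u = c) (hab : a ≤ b) (hap : a ≤ p) :
    (∫ u in a..b, k u) + c * (p - b) ≤ ∫ u in a..p, k u := by
  rcases le_total b p with hbp | hpb
  · exact (integral_eq_integral_add_mul_sub hk heq hab hbp).ge
  · have hpb_int : IntervalIntegrable k MeasureTheory.volume p b :=
      intervalIntegrable_of_continuousOn_Ici hk hap hab
    have hint_le : ∫ u in p..b, k u ≤ c * (b - p) := calc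
      _ ≤ ∫ _ in p..b, c :=
        integral_mono_on hpb hpb_int intervalIntegrable_const fun u hu => hle u (hap.trans hu.1)
      _ = c * (b - p) := by rw [integral_const, smul_eq_mul, mul_comm]
    rw [← integral_add_adjacent_intervals
      (intervalIntegrable_of_continuousOn_Ici hk le_rfl hap) hpb_int]
    linarith
end

theorem exp_neg_mul_sub_le_of_add_mul_le {c pM R p Hp Hη : ℝ} (hc : 0 < c) (hpMc : pM * c = 1)
    (hH : Hη + c * (p - (R + pM)) ≤ Hp) : exp (-Hp) * (p - R) ≤ exp (-Hη) * pM := by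
  have hpM : 0 ≤ pM := nonneg_of_mul_nonneg_left (hpMc ▸ zero_le_one) hc
  rcases le_total p R with hpR | hRp
  · exact (mul_nonpos_of_nonneg_of_nonpos (exp_pos _).le (sub_nonpos.2 hpR)).trans (by positivity)
  · have hexp : -(Hη + c * (p - (R + pM))) = -Hη + 1 + -(c * (p - R)) := by
      linear_combination hpMc
    calc exp (-Hp) * (p - R) ≤ exp (-(Hη + c * (p - (R + pM)))) * (p - R) := by gcongr
      _ = exp (-Hη) * pM * exp 1 * (c * (p - R) * exp (-(c * (p - R)))) := by
          rw [hexp, exp_add, exp_add]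
          linear_combination -exp (-Hη) * exp 1 * exp (-(c * (p - R))) * (p - R) * hpMc
      _ ≤ exp (-Hη) * pM * exp 1 * exp (-1) := by
          gcongr; exact mul_exp_neg_le_exp_neg_one _
      _ = exp (-Hη) * pM := by rw [mul_assoc, ← exp_add]; simp

theorem stmt_6_general (F f : ℝ → ℝ)
    (hderiv : ∀ z ∈ Set.Ici (0:ℝ), HasDerivAt F (f z) z)
    (hcont : ContinuousOn f (Set.Ici 0))
    (hF0 : F 0 = 0)
    (hF1 : ∀ z ∈ Set.Ici (0:ℝ), F z < 1)
    (hMHR : ∀ x ∈ Set.Ici (0:ℝ), ∀ y ∈ Set.Ici (0:ℝ), x ≤ y →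
      f x / (1 - F x) ≤ f y / (1 - F y))
    (pM : ℝ) (hpM : 0 < pM)
    (hFOC : pM * (f pM / (1 - F pM)) = 1)
    (Ft : ℝ → ℝ)
    (hFt : ∀ v, Ft v = 1 - Real.exp (-∫ u in (0:ℝ)..v,
      if u ≤ pM then f u / (1 - F u) else f pM / (1 - F pM))) :
    ∀ R ∈ Set.Ici (0:ℝ),
      IsMaxOn (fun p => (1 - Ft p) * (p - R)) (Set.Ici 0) (R + pM) ∧
        (1 - Ft (R + pM)) * ((R + pM) - R) =
          pM * (1 - F pM) * Real.exp (-R * (f pM / (1 - F pM))) := by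
  set h : ℝ → ℝ := fun u => f u / (1 - F u)
  set c := h pM
  have hc : 0 < c := pos_of_mul_pos_right (hFOC ▸ one_pos) hpM.le
  -- the hybrid hazard `if u ≤ pM then h u else h pM` is `h (min u pM)`
  have hk : ContinuousOn (fun u => h (min u pM)) (Ici 0) :=
    (continuousOn_hazardRate hderiv hcont hF1).comp
      (continuous_id.min continuous_const).continuousOn fun u hu => le_min hu hpM.le
  have hle : ∀ u ∈ Ici (0:ℝ), h (min u pM) ≤ c := fun u hu =>
    hMHR _ (le_min hu hpM.le) _ hpM.le (min_le_right _ _)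
  have heq : ∀ u ∈ Ici pM, h (min u pM) = c := fun u hu => by rw [min_eq_right hu]
  have hS : ∀ v, 1 - Ft v = exp (-∫ u in 0..v, h (min u pM)) := fun v => by
    simp only [hFt, sub_sub_cancel, min_def, apply_ite h]
    rfl
  have hH : ∫ u in 0..pM, h (min u pM) = -log (1 - F pM) := by
    rw [integral_congr (g := h) fun u hu => by rw [min_eq_left (uIcc_of_le hpM.le ▸ hu).2],
      integral_hazardRate_eq_log_sub hpM.le (fun z hz => hderiv z hz.1)
        (hcont.mono Icc_subset_Ici_self) (fun z hz => hF1 z hz.1), hF0, sub_zero, log_one, zero_sub]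
  intro R hR
  have hη : pM ≤ R + pM := le_add_of_nonneg_left hR
  have hval : (1 - Ft (R + pM)) * (R + pM - R) = pM * (1 - F pM) * exp (-R * c) := by
    rw [hS, integral_eq_integral_add_mul_sub hk heq hpM.le hη, hH, add_sub_cancel_right,
      add_sub_cancel_left, neg_add, neg_neg, exp_add, exp_log (sub_pos.2 (hF1 pM hpM.le))]
    ring_nf
  refine ⟨fun p hp => ?_, hval⟩
  show (1 - Ft p) * (p - R) ≤ (1 - Ft (R + pM)) * (R + pM - R)
  rw [hS, hS, add_sub_cancel_left]
  exact exp_neg_mul_sub_le_of_add_mul_le hc hFOC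
    (integral_add_mul_sub_le_integral hk hle (fun u hu => heq u (hη.trans hu)) (hpM.le.trans hη) hp)

/-- For the hybrid distribution `F̃`, for every outside option `R ≥ 0`, the
incremental revenue is maximized at `η̃ = R + p_M`, where it equals
`R_M e^{-R h(p_M)}` with `R_M = p_M (1 - F(p_M))`. -/
theorem stmt_6 (F f : ℝ → ℝ)
    (hderiv : ∀ z ∈ Set.Ici (0:ℝ), HasDerivAt F (f z) z)
    (hcont : ContinuousOn f (Set.Ici 0))
    (hfpos : ∀ z ∈ Set.Ici (0:ℝ), 0 < f z)
    (hF0 : F 0 = 0)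
    (hF1 : ∀ z ∈ Set.Ici (0:ℝ), F z < 1)
    (hMHR : ∀ x ∈ Set.Ici (0:ℝ), ∀ y ∈ Set.Ici (0:ℝ), x ≤ y →
      f x / (1 - F x) ≤ f y / (1 - F y))
    (pM : ℝ) (hpM : 0 < pM)
    (hFOC : pM * (f pM / (1 - F pM)) = 1)
    (Ft : ℝ → ℝ)
    (hFt : ∀ v, Ft v = 1 - Real.exp (-∫ u in (0:ℝ)..v,
      if u ≤ pM then f u / (1 - F u) else f pM / (1 - F pM))) :
    ∀ R ∈ Set.Ici (0:ℝ),
      IsMaxOn (fun p => (1 - Ft p) * (p - R)) (Set.Ici 0) (R + pM) ∧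
        (1 - Ft (R + pM)) * ((R + pM) - R) =
          pM * (1 - F pM) * Real.exp (-R * (f pM / (1 - F pM))) :=
  stmt_6_general F f hderiv hcont hF0 hF1 hMHR pM hpM hFOC Ft hFt
end

section
/- Let F : [0, ∞) → ℝ be continuously differentiable with derivative f > 0, F(0) = 0, F < 1, with nondecreasing hazard rate h(z) = f(z)/(1 − F(z)). Suppose the Myerson revenue R_M = sup_{p ≥ 0} p(1 − F(p)) is finite, positive, and attained at some p_M > 0 satisfying p_M h(p_M) = 1, and set γ = 1/(e · R_M). Then for every outside option R ≥ 0, the optimal incremental revenue satisfies sup_{p ≥ 0} (1 − F(p))(p − R) ≤ (1/(eγ)) · e^{−γR}. -/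
/-!
Since `p_M h(p_M) = 1`, the function `log (1 - F z) + z / p_M` has derivative `1 / p_M - h z`,
which by monotonicity of the hazard rate is nonnegative before `p_M` and nonpositive after it.
Hence `1 - F z ≤ (1 - F p_M) e^{1 - z/p_M}` for all `z ≥ 0`: the survival function is dominated by
the exponential tail through `p_M`. At `z = 0` this gives `1 - F p_M ≥ 1/e`, i.e. `p_M ≤ e R_M`,
so `1 / p_M ≥ γ`. Against the exponential tail, `x e^{1 - x} ≤ 1` bounds the incremental revenue
by `R_M e^{-R/p_M} ≤ R_M e^{-γ R}`.
-/

open Real Set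

lemma isMaxOn_Ici_of_hasDerivAt {φ φ' : ℝ → ℝ} {a c : ℝ} (hac : a ≤ c)
    (hφ : ∀ z ∈ Ici a, HasDerivAt φ (φ' z) z)
    (hinc : ∀ z ∈ Ioo a c, 0 ≤ φ' z) (hdec : ∀ z ∈ Ioi c, φ' z ≤ 0) :
    IsMaxOn φ (Ici a) c := by
  have hcont : ContinuousOn φ (Ici a) := fun z hz => (hφ z hz).continuousAt.continuousWithinAt
  have hmono : MonotoneOn φ (Icc a c) := by
    refine monotoneOn_of_hasDerivWithinAt_nonneg (f' := φ') (convex_Icc a c)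
      (hcont.mono Icc_subset_Ici_self) (fun z hz => ?_) (fun z hz => ?_)
    · rw [interior_Icc] at hz ⊢
      exact (hφ z hz.1.le).hasDerivWithinAt
    · rw [interior_Icc] at hz
      exact hinc z hz
  have hanti : AntitoneOn φ (Ici c) := by
    refine antitoneOn_of_hasDerivWithinAt_nonpos (f' := φ') (convex_Ici c)
      (hcont.mono (Ici_subset_Ici.2 hac)) (fun z hz => ?_) (fun z hz => ?_)
    · rw [interior_Ici] at hz ⊢
      exact (hφ z (hac.trans hz.le)).hasDerivWithinAt
    · rw [interior_Ici] at hz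
      exact hdec z hz
  intro z hz
  rcases le_total z c with hzc | hcz
  · exact hmono ⟨hz, hzc⟩ ⟨hac, le_rfl⟩ hzc
  · exact hanti self_mem_Ici hcz hcz

lemma survival_le_mul_exp_of_monotoneOn_hazard {F f : ℝ → ℝ} {c : ℝ}
    (hderiv : ∀ z ∈ Ici (0 : ℝ), HasDerivAt F (f z) z)
    (hF1 : ∀ z ∈ Ici (0 : ℝ), F z < 1)
    (hMHR : MonotoneOn (fun z => f z / (1 - F z)) (Ici 0))
    (hc : 0 < c) (hFOC : c * (f c / (1 - F c)) = 1) {z : ℝ} (hz : 0 ≤ z) :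
    1 - F z ≤ (1 - F c) * exp (1 - z / c) := by
  have hG : ∀ z ∈ Ici (0 : ℝ), 0 < 1 - F z := fun z hz => sub_pos.2 (hF1 z hz)
  have hhazard_c : f c / (1 - F c) = 1 / c := eq_one_div_of_mul_eq_one_right hFOC
  have hmax : IsMaxOn (fun z => log (1 - F z) + z / c) (Ici 0) c := by
    refine isMaxOn_Ici_of_hasDerivAt (φ' := fun z => 1 / c - f z / (1 - F z)) hc.le
      (fun z hz => ?_) (fun z hz => ?_) (fun z hz => ?_)
    · exact ((((hderiv z hz).const_sub 1).log (hG z hz).ne').add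
        ((hasDerivAt_id z).div_const c)).congr_deriv (by ring)
    · have := hMHR (le_of_lt hz.1) hc.le hz.2.le
      simp only at this ⊢
      linarith
    · have := hMHR hc.le (hc.le.trans hz.le) (le_of_lt hz)
      simp only at this ⊢
      linarith
  have hlog : log (1 - F z) + z / c ≤ log (1 - F c) + c / c := hmax hz
  rw [div_self hc.ne'] at hlog
  rw [← log_le_log_iff (hG z hz) (by positivity [hG c hc.le]), log_mul (hG c hc.le).ne'
    (exp_pos _).ne', log_exp]
  linarith

lemma mul_exp_one_sub_le_one (x : ℝ) : x * exp (1 - x) ≤ 1 :=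
  calc x * exp (1 - x) ≤ exp (x - 1) * exp (1 - x) := by
        gcongr
        linarith [add_one_le_exp (x - 1)]
    _ = 1 := by rw [← exp_add]; simp

lemma sub_mul_exp_le {c : ℝ} (hc : 0 < c) (p R : ℝ) :
    (p - R) * exp (1 - p / c) ≤ c * exp (-R / c) := by
  have hsplit : (p - R) * exp (1 - p / c) =
      c * exp (-R / c) * ((p - R) / c * exp (1 - (p - R) / c)) := by
    rw [mul_mul_mul_comm, ← exp_add]
    field_simp
    ring_nf
  rw [hsplit]
  exact mul_le_of_le_one_right (by positivity) (mul_exp_one_sub_le_one _)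

lemma mul_sub_le_of_le_mul_exp {c s s₀ p R : ℝ} (hc : 0 < c) (hs : 0 ≤ s)
    (h : s ≤ s₀ * exp (1 - p / c)) : s * (p - R) ≤ c * s₀ * exp (-R / c) := by
  have hs₀ : 0 ≤ s₀ := (mul_nonneg_iff_of_pos_right (exp_pos _)).1 (hs.trans h)
  rcases le_total p R with hpR | hRp
  · have : s * (p - R) ≤ 0 := mul_nonpos_of_nonneg_of_nonpos hs (sub_nonpos.2 hpR)
    exact this.trans (by positivity)
  · calc s * (p - R) ≤ s₀ * exp (1 - p / c) * (p - R) := by gcongr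
      _ = s₀ * ((p - R) * exp (1 - p / c)) := by ring
      _ ≤ s₀ * (c * exp (-R / c)) := mul_le_mul_of_nonneg_left (sub_mul_exp_le hc p R) hs₀
      _ = c * s₀ * exp (-R / c) := by ring

theorem stmt_7_general (F f : ℝ → ℝ)
    (hderiv : ∀ z ∈ Set.Ici (0:ℝ), HasDerivAt F (f z) z)
    (hF0 : F 0 = 0)
    (hF1 : ∀ z ∈ Set.Ici (0:ℝ), F z < 1)
    (hMHR : ∀ x ∈ Set.Ici (0:ℝ), ∀ y ∈ Set.Ici (0:ℝ), x ≤ y →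
      f x / (1 - F x) ≤ f y / (1 - F y))
    (pM RM : ℝ) (hpM : 0 < pM) (hRMpos : 0 < RM)
    (hRMdef : RM = pM * (1 - F pM))
    (hFOC : pM * (f pM / (1 - F pM)) = 1)
    (γ : ℝ) (hγ : γ = 1 / (Real.exp 1 * RM)) :
    ∀ R ∈ Set.Ici (0:ℝ),
      sSup ((fun p => (1 - F p) * (p - R)) '' Set.Ici 0) ≤
        1 / (Real.exp 1 * γ) * Real.exp (-γ * R) := by
  intro R hR
  have hsurv : ∀ z ∈ Ici (0 : ℝ), 1 - F z ≤ (1 - F pM) * exp (1 - z / pM) := fun z hz =>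
    survival_le_mul_exp_of_monotoneOn_hazard hderiv hF1 hMHR hpM hFOC hz
  have hpM_le : pM ≤ exp 1 * RM := by
    have h0 := hsurv 0 self_mem_Ici
    simp only [hF0, sub_zero, zero_div] at h0
    rw [hRMdef]
    nlinarith [exp_pos 1]
  have hγ_le : γ ≤ 1 / pM := hγ ▸ one_div_le_one_div_of_le hpM hpM_le
  have hrev : ∀ p ∈ Ici (0 : ℝ), (1 - F p) * (p - R) ≤ RM * exp (-R / pM) := fun p hp =>
    hRMdef ▸ mul_sub_le_of_le_mul_exp hpM (sub_pos.2 (hF1 p hp)).le (hsurv p hp)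
  calc sSup ((fun p => (1 - F p) * (p - R)) '' Ici 0) ≤ RM * exp (-R / pM) :=
        Real.sSup_le (by rintro _ ⟨p, hp, rfl⟩; exact hrev p hp) (by positivity)
    _ ≤ RM * exp (-γ * R) := by
        gcongr
        rw [neg_div, neg_mul, neg_le_neg_iff, div_eq_mul_one_div, mul_comm]
        exact mul_le_mul_of_nonneg_left hγ_le hR
    _ = 1 / (exp 1 * γ) * exp (-γ * R) := by rw [hγ]; field_simp

/-- Exponential domination: for an MHR distribution with Myerson revenue `R_M`,
setting `γ = 1/(e R_M)`, the optimal incremental revenue over any outside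
option `R ≥ 0` is at most `(1/(eγ)) e^{-γ R}`. -/
theorem stmt_7 (F f : ℝ → ℝ)
    (hderiv : ∀ z ∈ Set.Ici (0:ℝ), HasDerivAt F (f z) z)
    (hcont : ContinuousOn f (Set.Ici 0))
    (hfpos : ∀ z ∈ Set.Ici (0:ℝ), 0 < f z)
    (hF0 : F 0 = 0)
    (hF1 : ∀ z ∈ Set.Ici (0:ℝ), F z < 1)
    (hMHR : ∀ x ∈ Set.Ici (0:ℝ), ∀ y ∈ Set.Ici (0:ℝ), x ≤ y →
      f x / (1 - F x) ≤ f y / (1 - F y))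
    (pM RM : ℝ) (hpM : 0 < pM) (hRMpos : 0 < RM)
    (hRMdef : RM = pM * (1 - F pM))
    (hRMmax : IsMaxOn (fun p => p * (1 - F p)) (Set.Ici 0) pM)
    (hFOC : pM * (f pM / (1 - F pM)) = 1)
    (γ : ℝ) (hγ : γ = 1 / (Real.exp 1 * RM)) :
    ∀ R ∈ Set.Ici (0:ℝ),
      sSup ((fun p => (1 - F p) * (p - R)) '' Set.Ici 0) ≤
        1 / (Real.exp 1 * γ) * Real.exp (-γ * R) :=
  stmt_7_general F f hderiv hF0 hF1 hMHR pM RM hpM hRMpos hRMdef hFOC γ hγ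
end

section
/- Let γ > 0 and let (a_k)_{k ≥ 1} be a sequence of nonnegative reals satisfying a_1 ≤ 1/(eγ) and a_k ≤ a_{k−1} + (1/(eγ)) · e^{−γ a_{k−1}} for all k ≥ 2. Then a_k ≤ (ln k)/γ for all k ≥ 2. -/
/-!
Rescale by `b_k = γ a_k`: the recursion becomes `b_k ≤ g(b_{k-1})` with `g(x) = x + e^{-(x+1)}`,
which is monotone on `[-1, ∞)`. Since `g(log n) = log n + 1/(en) ≤ log n + 1/(n+1) ≤ log (n+1)`,
the bound `b_k ≤ log k` propagates by induction from `b_2 ≤ g(1/e) ≤ log 2`.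
-/

open Real Set

lemma monotoneOn_add_exp_neg : MonotoneOn (fun x : ℝ => x + exp (-x)) (Ici 0) := by
  intro x (hx : 0 ≤ x) y _ hxy
  have hfactor : exp (-x) - exp (-y) = exp (-x) * (1 - exp (-(y - x))) := by
    rw [mul_sub, mul_one, ← exp_add]; ring_nf
  have hx_exp : exp (-x) ≤ 1 := exp_le_one_iff.2 (by linarith)
  have hgap_le : 1 - exp (-(y - x)) ≤ y - x := by linarith [add_one_le_exp (-(y - x))]
  have hgap_nonneg : 0 ≤ 1 - exp (-(y - x)) := by
    linarith [exp_le_one_iff.2 (show -(y - x) ≤ 0 by linarith)]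
  show x + exp (-x) ≤ y + exp (-y)
  nlinarith [mul_le_mul hx_exp hgap_le hgap_nonneg zero_le_one]

lemma inv_add_one_le_log_add_one_sub_log {x : ℝ} (hx : 0 < x) :
    (x + 1)⁻¹ ≤ log (x + 1) - log x := by
  have h := one_sub_inv_le_log_of_pos (show 0 < (x + 1) / x by positivity)
  rw [log_div (by positivity) hx.ne', inv_div] at h
  convert h using 1
  field_simp
  ring

lemma log_add_exp_neg_log_add_one_le {x : ℝ} (hx : 1 ≤ x) :
    log x + exp (-(log x + 1)) ≤ log (x + 1) := by
  have hx0 : 0 < x := by linarith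
  have hexp : exp (-(log x + 1)) = (exp 1 * x)⁻¹ := by
    rw [neg_add, exp_add, exp_neg, exp_neg, exp_log hx0, mul_inv, mul_comm]
  have hle : exp (-(log x + 1)) ≤ (x + 1)⁻¹ := by
    rw [hexp]
    gcongr
    nlinarith [exp_one_gt_d9]
  linarith [inv_add_one_le_log_add_one_sub_log hx0]

lemma exp_neg_one_add_exp_neg_le_log_two : exp (-1) + exp (-(exp (-1) + 1)) ≤ log 2 := by
  have he : 2.7182818283 < exp 1 := exp_one_gt_d9
  -- `1 + e⁻¹ ≤ exp e⁻¹` gives `exp (-(e⁻¹ + 1)) ≤ (e + 1)⁻¹`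
  have htail : exp (-(exp (-1) + 1)) ≤ (exp 1 + 1)⁻¹ := by
    rw [neg_add, exp_add, exp_neg (exp (-1)), exp_neg 1, ← mul_inv]
    gcongr
    nlinarith [add_one_le_exp (exp 1)⁻¹, mul_inv_cancel₀ (exp_pos 1).ne']
  have hhead : exp (-1) ≤ (2.7 : ℝ)⁻¹ := by rw [exp_neg]; gcongr; linarith
  have htail_num : (exp 1 + 1)⁻¹ ≤ (3.7 : ℝ)⁻¹ := by gcongr; linarith
  linarith [log_two_gt_d9]

theorem le_log_of_le_add_exp_neg {b : ℕ → ℝ} (hb : ∀ k, -1 ≤ b k) (h1 : b 1 ≤ exp (-1))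
    (hrec : ∀ k, 1 ≤ k → b (k + 1) ≤ b k + exp (-(b k + 1))) :
    ∀ k, 2 ≤ k → b k ≤ log k := by
  have step {x y : ℝ} (hx : -1 ≤ x) (hxy : x ≤ y) :
      x + exp (-(x + 1)) ≤ y + exp (-(y + 1)) := by
    have := monotoneOn_add_exp_neg (mem_Ici.2 (by linarith : (0 : ℝ) ≤ x + 1))
      (mem_Ici.2 (by linarith : (0 : ℝ) ≤ y + 1)) (by linarith)
    simp only at this
    linarith
  intro k hk
  induction k, hk using Nat.le_induction with
  | base =>
    rw [Nat.cast_ofNat]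
    linarith [step (hb 1) h1, hrec 1 le_rfl, exp_neg_one_add_exp_neg_le_log_two]
  | succ n hn ih =>
    have hn1 : (1 : ℝ) ≤ n := by exact_mod_cast (by omega : 1 ≤ n)
    push_cast
    linarith [hrec n (by omega), step (hb n) ih, log_add_exp_neg_log_add_one_le hn1]

/-- The induction at the heart of the single-item approximation theorem:
if `a₁ ≤ 1/(eγ)` and `a_k ≤ a_{k-1} + (1/(eγ)) e^{-γ a_{k-1}}`,
then `a_k ≤ (ln k)/γ` for all `k ≥ 2`. -/
theorem stmt_8 (γ : ℝ) (hγ : 0 < γ) (a : ℕ → ℝ) (ha : ∀ k, 0 ≤ a k)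
    (h1 : a 1 ≤ 1 / (Real.exp 1 * γ))
    (hrec : ∀ k, 2 ≤ k →
      a k ≤ a (k - 1) + 1 / (Real.exp 1 * γ) * Real.exp (-γ * a (k - 1))) :
    ∀ k, 2 ≤ k → a k ≤ Real.log k / γ := by
  have hscale (x : ℝ) : γ * (1 / (exp 1 * γ) * exp (-γ * x)) = exp (-(γ * x + 1)) := by
    rw [neg_add, exp_add, exp_neg 1]
    field_simp
  have hb : ∀ k, 2 ≤ k → γ * a k ≤ log k := by
    refine le_log_of_le_add_exp_neg (fun k => by nlinarith [ha k]) ?_ fun k hk => ?_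
    · rw [exp_neg, ← one_div]
      calc γ * a 1 ≤ γ * (1 / (exp 1 * γ)) := by gcongr
        _ = 1 / exp 1 := by field_simp
    · have := hrec (k + 1) (by omega)
      rw [Nat.add_sub_cancel] at this
      rw [← hscale]
      nlinarith
  exact fun k hk => (le_div_iff₀ hγ).2 (by linarith [hb k hk])
end

section
/- For i = 1, …, n (with n ≥ 2), let F_i : [0, ∞) → ℝ be continuously differentiable with density f_i > 0, F_i(0) = 0, F_i < 1, with nondecreasing hazard rate, and suppose each Myerson revenue R_M^i = sup_{p ≥ 0} p(1 − F_i(p)) is finite, positive, and attained at a price satisfying the first-order condition. Define G_i(R) = sup_{p ≥ 0} [(1 − F_i(p)) p + F_i(p) R] for R ≥ 0. For any ordering (i_1, …, i_n) of the items, define the optimal cascade revenue by R_0 = 0 and R_k = G_{i_k}(R_{k−1}) for k = 1, …, n. Then R_n ≤ (e · ln n) · max_i R_M^i. -/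
/-!
Fix `M ≥ max_i RM i`. For a single MHR item with monopoly price `pM`, the first-order condition
says that the hazard rate at `pM` is `1 / pM`. Integrating the monotone hazard rate, the survival
function decays at least like `exp (-(p - pM) / pM)` beyond `pM`, and `1 - F pM ≥ 1 / e`, i.e.
`pM ≤ e * RM`. This bounds the gain of selling the item with outside option `R`:
`G R - R = sup_p (1 - F p) (p - R) ≤ RM exp (-R / pM) ≤ M exp (-R / (e M))`.
So `x_k = R_k / (e M)` satisfies `x_{k+1} ≤ x_k + exp (-x_k) / e`; by convexity of `exp`,
each step raises `exp x_k ≥ 1` by at most `exp (1 / e) - 1 ≤ 1 / 2`, whence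
`exp x_n ≤ 1 + n / 2 ≤ n`.
-/

open Real Set

lemma mul_sub_le_sub_of_le_hasDerivAt {g g' : ℝ → ℝ} {a b C : ℝ} (hab : a ≤ b)
    (hg : ∀ z ∈ Icc a b, HasDerivAt g (g' z) z) (hC : ∀ z ∈ Icc a b, C ≤ g' z) :
    C * (b - a) ≤ g b - g a := by
  refine (convex_Icc a b).mul_sub_le_image_sub_of_le_deriv
    (fun z hz => (hg z hz).continuousAt.continuousWithinAt)
    (fun z hz => (hg z (interior_subset hz)).differentiableAt.differentiableWithinAt)
    (fun z hz => ?_) a (left_mem_Icc.2 hab) b (right_mem_Icc.2 hab) hab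
  rw [(hg z (interior_subset hz)).deriv]
  exact hC z (interior_subset hz)

structure IsMHR (F f : ℝ → ℝ) : Prop where
  hasDerivAt : ∀ z ∈ Ici (0:ℝ), HasDerivAt F (f z) z
  lt_one : ∀ z ∈ Ici (0:ℝ), F z < 1
  hazard_mono : ∀ x ∈ Ici (0:ℝ), ∀ y ∈ Ici (0:ℝ), x ≤ y →
    f x / (1 - F x) ≤ f y / (1 - F y)

structure IsMonopolyPrice (F f : ℝ → ℝ) (pM : ℝ) : Prop where
  pos : 0 < pM
  isMaxOn : IsMaxOn (fun p => p * (1 - F p)) (Ici 0) pM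
  foc : pM * (f pM / (1 - F pM)) = 1

namespace IsMHR

variable {F f : ℝ → ℝ}

lemma survival_pos (hF : IsMHR F f) {z : ℝ} (hz : 0 ≤ z) : 0 < 1 - F z :=
  sub_pos.2 (hF.lt_one z hz)

lemma hasDerivAt_log_survival (hF : IsMHR F f) {z : ℝ} (hz : 0 ≤ z) :
    HasDerivAt (fun z => log (1 - F z)) (-(f z / (1 - F z))) z := by
  rw [← neg_div]
  exact ((hF.hasDerivAt z hz).const_sub 1).log (hF.survival_pos hz).ne'

lemma neg_hazard_mul_le_log_survival_sub (hF : IsMHR F f) {a b : ℝ} (ha : 0 ≤ a)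
    (hab : a ≤ b) :
    -(f b / (1 - F b)) * (b - a) ≤ log (1 - F b) - log (1 - F a) :=
  mul_sub_le_sub_of_le_hasDerivAt hab
    (fun _ hz => hF.hasDerivAt_log_survival (ha.trans hz.1))
    (fun z hz => neg_le_neg (hF.hazard_mono z (ha.trans hz.1) b (ha.trans hab) hz.2))

lemma log_survival_sub_le_neg_hazard_mul (hF : IsMHR F f) {a b : ℝ} (ha : 0 ≤ a)
    (hab : a ≤ b) :
    log (1 - F b) - log (1 - F a) ≤ -(f a / (1 - F a)) * (b - a) := by
  have := mul_sub_le_sub_of_le_hasDerivAt hab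
    (fun _ hz => (hF.hasDerivAt_log_survival (ha.trans hz.1)).neg)
    (fun z hz => neg_le_neg (neg_le_neg (hF.hazard_mono a ha z (ha.trans hz.1) hz.1)))
  simp only [Pi.neg_apply] at this
  linarith

variable {pM : ℝ}

lemma exp_neg_one_le_survival (hF : IsMHR F f) (hF0 : F 0 = 0) (hpM : IsMonopolyPrice F f pM) :
    exp (-1) ≤ 1 - F pM := by
  have := hF.neg_hazard_mul_le_log_survival_sub le_rfl hpM.pos.le
  simp only [hF0, sub_zero, log_one] at this
  rw [neg_mul, mul_comm, hpM.foc] at this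
  rw [← exp_log (hF.survival_pos hpM.pos.le)]
  exact exp_le_exp.2 this

lemma survival_le_mul_exp_neg (hF : IsMHR F f) (hpM : IsMonopolyPrice F f pM) {p : ℝ}
    (hp : pM ≤ p) : 1 - F p ≤ (1 - F pM) * exp (-((p - pM) / pM)) := by
  have hhaz : f pM / (1 - F pM) = 1 / pM := by
    rw [eq_div_iff hpM.pos.ne', mul_comm, hpM.foc]
  have := hF.log_survival_sub_le_neg_hazard_mul hpM.pos.le hp
  rw [hhaz, neg_mul, one_div_mul_eq_div] at this
  rw [← exp_log (hF.survival_pos (hpM.pos.le.trans hp)),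
    ← exp_log (hF.survival_pos hpM.pos.le), ← exp_add]
  exact exp_le_exp.2 (by linarith)

lemma survival_mul_sub_le (hF : IsMHR F f) (hpM : IsMonopolyPrice F f pM) {p R : ℝ}
    (hp : 0 ≤ p) (hR : 0 ≤ R) :
    (1 - F p) * (p - R) ≤ pM * (1 - F pM) * exp (-(R / pM)) := by
  have hp0 := hpM.pos
  have hSp := hF.survival_pos hp
  have hSM := hF.survival_pos hp0.le
  rcases le_or_gt p R with hpR | hRp
  · exact (mul_nonpos_of_nonneg_of_nonpos hSp.le (sub_nonpos.2 hpR)).trans (by positivity)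
  rcases le_or_gt p pM with hp_le | hp_gt
  · have hrev : p * (1 - F p) ≤ pM * (1 - F pM) := hpM.isMaxOn (show p ∈ Ici 0 from hp)
    -- if `1 - F p ≤ 1 - F pM` use `p ≤ pM`, otherwise use `hrev` and `R ≥ 0`
    have hlin : (1 - F p) * (p - R) ≤ (1 - F pM) * (pM - R) := by
      rcases le_total (1 - F p) (1 - F pM) with h | h <;> nlinarith
    calc (1 - F p) * (p - R) ≤ (1 - F pM) * (pM - R) := hlin
      _ = pM * (1 - F pM) * (-(R / pM) + 1) := by field_simp; ring
      _ ≤ pM * (1 - F pM) * exp (-(R / pM)) := by gcongr; exact add_one_le_exp _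
  · have hsplit : exp (-((p - pM) / pM)) * (p - R) =
        pM * exp (-(R / pM)) * (exp 1 * ((p - R) / pM * exp (-((p - R) / pM)))) := by
      have hexponent : -((p - pM) / pM) = -(R / pM) + (1 + -((p - R) / pM)) := by
        field_simp; ring
      rw [hexponent, exp_add, exp_add]
      field_simp
    calc (1 - F p) * (p - R) ≤ (1 - F pM) * exp (-((p - pM) / pM)) * (p - R) := by
          gcongr; exact hF.survival_le_mul_exp_neg hpM hp_gt.le
      _ = (1 - F pM) *
            (pM * exp (-(R / pM)) * (exp 1 * ((p - R) / pM * exp (-((p - R) / pM))))) := by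
          rw [mul_assoc, hsplit]
      _ ≤ (1 - F pM) * (pM * exp (-(R / pM)) * (exp 1 * exp (-1))) := by
          gcongr; exact mul_exp_neg_le_exp_neg_one _
      _ = pM * (1 - F pM) * exp (-(R / pM)) := by
          rw [← exp_add, add_neg_cancel, exp_zero]; ring

lemma survival_mul_sub_le_of_revenue_le (hF : IsMHR F f) (hF0 : F 0 = 0)
    (hpM : IsMonopolyPrice F f pM) {M : ℝ} (hM : pM * (1 - F pM) ≤ M) {p R : ℝ} (hp : 0 ≤ p)
    (hR : 0 ≤ R) : (1 - F p) * (p - R) ≤ M * exp (-(R / (exp 1 * M))) := by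
  have hpM_le : pM ≤ exp 1 * M := by
    have := mul_le_mul_of_nonneg_left (hF.exp_neg_one_le_survival hF0 hpM) hpM.pos.le
    rw [exp_neg, ← div_eq_mul_inv, div_le_iff₀ (exp_pos 1)] at this
    linarith [mul_le_mul_of_nonneg_right hM (exp_pos 1).le]
  have hM0 : 0 ≤ M := (mul_pos hpM.pos (hF.survival_pos hpM.pos.le)).le.trans hM
  have hp0 := hpM.pos
  calc (1 - F p) * (p - R) ≤ pM * (1 - F pM) * exp (-(R / pM)) :=
        hF.survival_mul_sub_le hpM hp hR
    _ ≤ M * exp (-(R / (exp 1 * M))) := by gcongr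

lemma sSup_revenue_le (hF : IsMHR F f) (hF0 : F 0 = 0) (hpM : IsMonopolyPrice F f pM) {M : ℝ}
    (hM : pM * (1 - F pM) ≤ M) {R : ℝ} (hR : 0 ≤ R) :
    sSup ((fun p => (1 - F p) * p + F p * R) '' Ici 0) ≤ R + M * exp (-(R / (exp 1 * M))) :=
  csSup_le (nonempty_Ici.image _) <| forall_mem_image.2 fun p hp => by
    have := hF.survival_mul_sub_le_of_revenue_le hF0 hpM hM hp hR
    linarith

end IsMHR

lemma sSup_revenue_nonneg {F : ℝ → ℝ} (hF0 : F 0 = 0) (R : ℝ) :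
    0 ≤ sSup ((fun p => (1 - F p) * p + F p * R) '' Ici 0) :=
  Real.sSup_nonneg' ⟨0, ⟨0, self_mem_Ici, by simp [hF0]⟩, le_rfl⟩

lemma exp_le_three_halves {x : ℝ} (hx0 : 0 ≤ x) (hx : x ≤ 0.368) : exp x ≤ 3 / 2 := by
  have := exp_bound' hx0 (hx.trans (by norm_num)) (n := 3) (by norm_num)
  simp only [Finset.sum_range_succ, Finset.sum_range_zero, Nat.factorial] at this
  norm_num at this
  nlinarith [mul_nonneg hx0 hx0]

lemma exp_inv_exp_one_le : exp (exp 1)⁻¹ ≤ 3 / 2 := by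
  refine exp_le_three_halves (by positivity) ?_
  rw [inv_le_comm₀ (exp_pos 1) (by norm_num)]
  linarith [exp_one_gt_d9]

lemma exp_add_exp_neg_div_le {x : ℝ} (hx : 0 ≤ x) :
    exp (x + exp (-x) / exp 1) ≤ exp x + (exp (exp 1)⁻¹ - 1) := by
  set s := exp (-x)
  have hs0 : 0 ≤ s := (exp_pos _).le
  have hs1 : s ≤ 1 := exp_le_one_iff.2 (neg_nonpos.2 hx)
  have hchord : exp (s * (exp 1)⁻¹) ≤ 1 + s * (exp (exp 1)⁻¹ - 1) := by
    have := convexOn_exp.2 (mem_univ 0) (mem_univ (exp 1)⁻¹) (sub_nonneg.2 hs1) hs0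
      (sub_add_cancel 1 s)
    simp only [smul_eq_mul, mul_zero, zero_add, exp_zero, mul_one] at this
    linarith
  have hxs : exp x * s = 1 := by rw [← exp_add, add_neg_cancel, exp_zero]
  calc exp (x + s / exp 1) = exp x * exp (s * (exp 1)⁻¹) := by rw [exp_add, div_eq_mul_inv]
    _ ≤ exp x * (1 + s * (exp (exp 1)⁻¹ - 1)) := by gcongr
    _ = exp x + (exp (exp 1)⁻¹ - 1) := by rw [mul_add, ← mul_assoc, hxs]; ring

lemma exp_le_one_add_mul_of_le_add_exp_neg {x : ℕ → ℝ} {n : ℕ} (h0 : x 0 = 0)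
    (hnn : ∀ k ≤ n, 0 ≤ x k) (hstep : ∀ k < n, x (k + 1) ≤ x k + exp (-x k) / exp 1) :
    exp (x n) ≤ 1 + n * (exp (exp 1)⁻¹ - 1) := by
  induction n with
  | zero => simp [h0]
  | succ n ih =>
    have ih := ih (fun k hk => hnn k (by omega)) (fun k hk => hstep k (by omega))
    calc exp (x (n + 1)) ≤ exp (x n + exp (-x n) / exp 1) := exp_le_exp.2 (hstep n n.lt_succ_self)
      _ ≤ exp (x n) + (exp (exp 1)⁻¹ - 1) := exp_add_exp_neg_div_le (hnn n n.le_succ)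
      _ ≤ 1 + (n + 1 : ℕ) * (exp (exp 1)⁻¹ - 1) := by push_cast; linarith

lemma le_exp_one_mul_log_mul {R : ℕ → ℝ} {M : ℝ} {n : ℕ} (hn : 2 ≤ n) (hM : 0 < M)
    (h0 : R 0 = 0) (hnn : ∀ k ≤ n, 0 ≤ R k)
    (hstep : ∀ k < n, R (k + 1) ≤ R k + M * exp (-(R k / (exp 1 * M)))) :
    R n ≤ exp 1 * log n * M := by
  have heM : 0 < exp 1 * M := by positivity
  have hexp := exp_le_one_add_mul_of_le_add_exp_neg (x := fun k => R k / (exp 1 * M))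
    (by simp [h0]) (fun k hk => div_nonneg (hnn k hk) heM.le) fun k hk => by
      calc R (k + 1) / (exp 1 * M) ≤ (R k + M * exp (-(R k / (exp 1 * M)))) / (exp 1 * M) := by
            gcongr; exact hstep k hk
        _ = R k / (exp 1 * M) + exp (-(R k / (exp 1 * M))) / exp 1 := by field_simp
  have hn' : (2 : ℝ) ≤ n := by exact_mod_cast hn
  have hlog : R n / (exp 1 * M) ≤ log n := by
    rw [le_log_iff_exp_le (by linarith)]
    nlinarith [exp_inv_exp_one_le]
  rw [div_le_iff₀ heM] at hlog
  linarith

/-- The optimal cascade revenue over `n` items with independent MHR value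
distributions is at most `e ln n` times the largest single-item Myerson
revenue. -/
theorem stmt_9 (n : ℕ) (hn : 2 ≤ n) (F f : Fin n → ℝ → ℝ)
    (hderiv : ∀ i, ∀ z ∈ Set.Ici (0:ℝ), HasDerivAt (F i) (f i z) z)
    (hF0 : ∀ i, F i 0 = 0)
    (hF1 : ∀ i, ∀ z ∈ Set.Ici (0:ℝ), F i z < 1)
    (hMHR : ∀ i, ∀ x ∈ Set.Ici (0:ℝ), ∀ y ∈ Set.Ici (0:ℝ), x ≤ y →
      f i x / (1 - F i x) ≤ f i y / (1 - F i y))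
    (pM RM : Fin n → ℝ)
    (hpM : ∀ i, 0 < pM i)
    (hRMdef : ∀ i, RM i = pM i * (1 - F i (pM i)))
    (hRMmax : ∀ i, IsMaxOn (fun p => p * (1 - F i p)) (Set.Ici 0) (pM i))
    (hFOC : ∀ i, pM i * (f i (pM i) / (1 - F i (pM i))) = 1)
    (G : Fin n → ℝ → ℝ)
    (hG : ∀ i R, G i R = sSup ((fun p => (1 - F i p) * p + F i p * R) '' Set.Ici 0))
    (σ : Equiv.Perm (Fin n))
    (R : ℕ → ℝ) (hR0 : R 0 = 0)
    (hRk : ∀ k (hk : k < n), R (k + 1) = G (σ ⟨k, hk⟩) (R k)) :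
    R n ≤ Real.exp 1 * Real.log n *
      Finset.univ.sup' (Finset.univ_nonempty_iff.mpr ⟨⟨0, by omega⟩⟩) RM := by
  have hF : ∀ i, IsMHR (F i) (f i) := fun i => ⟨hderiv i, hF1 i, hMHR i⟩
  have hpM' : ∀ i, IsMonopolyPrice (F i) (f i) (pM i) := fun i => ⟨hpM i, hRMmax i, hFOC i⟩
  have hRM_le : ∀ i, RM i ≤ Finset.univ.sup' _ RM := fun i =>
    Finset.le_sup' RM (Finset.mem_univ _)
  have hRM_pos : ∀ i, 0 < RM i := fun i => by
    rw [hRMdef]; exact mul_pos (hpM i) ((hF i).survival_pos (hpM i).le)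
  have hRnn : ∀ k ≤ n, 0 ≤ R k := by
    rintro (_ | k) hk
    · exact hR0.ge
    · rw [hRk k hk, hG]; exact sSup_revenue_nonneg (hF0 _) _
  refine le_exp_one_mul_log_mul hn ((hRM_pos ⟨0, by omega⟩).trans_le (hRM_le _)) hR0 hRnn
    fun k hk => ?_
  rw [hRk k hk, hG]
  exact (hF _).sSup_revenue_le (hF0 _) (hpM' _) ((hRMdef _).symm.trans_le (hRM_le _))
    (hRnn k hk.le)
end

section
/- Let ι be a finite set and f a function on subsets of ι that is monotone (S ⊆ T implies f(S) ≤ f(T)), submodular (f(S ∪ T) + f(S ∩ T) ≤ f(S) + f(T)), and satisfies f(∅) = 0. Fix k ≥ 1 and construct S_0 = ∅ and, for j = 0, …, k−1, S_{j+1} = S_j ∪ {a_j}, where a_j ∈ ι maximizes f(S_j ∪ {a}) over all a ∈ ι. Then f(S_k) ≥ (1 − 1/e) · max{ f(T) : T ⊆ ι, |T| = k }. -/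
/-!
Submodularity bounds the value of any `T` by the value of the current greedy set `A` plus the
sum of the marginal gains of the elements of `T` over `A`, and each of those gains is at most
the greedy gain. Hence with `|T| = k` every greedy step closes at least a `1/k` fraction of the
gap `f T - f A`, so after `k` steps the gap is at most `(1 - 1/k)^k f T ≤ e⁻¹ f T`.
-/

section

open Finset

variable {ι : Type*} [DecidableEq ι] {f : Finset ι → ℝ}

theorem le_add_sum_marginal_of_submodular
    (hsub : ∀ S T : Finset ι, f (S ∪ T) + f (S ∩ T) ≤ f S + f T) (A T : Finset ι) :
    f (A ∪ T) ≤ f A + ∑ b ∈ T, (f (insert b A) - f A) := by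
  induction T using Finset.induction_on with
  | empty => simp
  | @insert b T hbT ih =>
    have hunion : insert b A ∪ (A ∪ T) = A ∪ insert b T := by grind
    have hinter : insert b A ∩ (A ∪ T) = A := by grind
    have := hsub (insert b A) (A ∪ T)
    rw [hunion, hinter] at this
    rw [sum_insert hbT]
    linarith

theorem sub_le_card_mul_greedy_gain (hmono : ∀ S T : Finset ι, S ⊆ T → f S ≤ f T)
    (hsub : ∀ S T : Finset ι, f (S ∪ T) + f (S ∩ T) ≤ f S + f T) {A : Finset ι} {a : ι}
    (hgreedy : ∀ b : ι, f (insert b A) ≤ f (insert a A)) (T : Finset ι) :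
    f T - f A ≤ #T * (f (insert a A) - f A) := by
  have hsum : ∑ b ∈ T, (f (insert b A) - f A) ≤ #T * (f (insert a A) - f A) := by
    simpa only [sum_const, nsmul_eq_mul] using
      sum_le_sum fun b (_ : b ∈ T) => sub_le_sub_right (hgreedy b) (f A)
  have := le_add_sum_marginal_of_submodular hsub A T
  linarith [hmono T (A ∪ T) subset_union_right]

end

theorem stmt_11_general {ι : Type*} [DecidableEq ι]
    (f : Finset ι → ℝ)
    (hmono : ∀ S T : Finset ι, S ⊆ T → f S ≤ f T)
    (hsub : ∀ S T : Finset ι, f (S ∪ T) + f (S ∩ T) ≤ f S + f T)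
    (hf0 : f ∅ = 0)
    (k : ℕ)
    (S : ℕ → Finset ι) (a : ℕ → ι)
    (hS0 : S 0 = ∅)
    (hgreedy : ∀ j < k, ∀ b : ι, f (insert b (S j)) ≤ f (insert (a j) (S j)))
    (hSsucc : ∀ j < k, S (j + 1) = insert (a j) (S j)) :
    ∀ T : Finset ι, T.card = k → (1 - 1 / Real.exp 1) * f T ≤ f (S k) := by
  intro T hT
  rcases Nat.eq_zero_or_pos k with rfl | hk
  · simp [Finset.card_eq_zero.mp hT, hS0, hf0]
  have hk' : (1 : ℝ) ≤ k := by exact_mod_cast hk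
  have hstep : ∀ j < k, f T - f (S (j + 1)) ≤ (1 - 1 / k) * (f T - f (S j)) := by
    intro j hj
    have := sub_le_card_mul_greedy_gain hmono hsub (hgreedy j hj) T
    rw [hT, ← hSsucc j hj] at this
    rw [one_sub_div (by positivity), div_mul_eq_mul_div, le_div_iff₀ (by positivity)]
    linarith
  have hgap : f T - f (S k) ≤ (1 - 1 / k) ^ k * f T := by
    simpa [hS0, hf0] using
      le_geom (u := fun j => f T - f (S j)) (sub_nonneg.2 (div_le_one_of_le₀ hk' k.cast_nonneg))
        k hstep
  have hpow : (1 - 1 / k : ℝ) ^ k ≤ 1 / Real.exp 1 := by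
    simpa [Real.exp_neg] using Real.one_sub_div_pow_le_exp_neg hk'
  have hT0 : 0 ≤ f T := hf0 ▸ hmono ∅ T (Finset.empty_subset T)
  linarith [mul_le_mul_of_nonneg_right hpow hT0]

/-- The greedy algorithm for maximizing a monotone submodular set function
with `f ∅ = 0` subject to a cardinality constraint `k` achieves a
`(1 - 1/e)` approximation. -/
theorem stmt_11 {ι : Type*} [Fintype ι] [DecidableEq ι]
    (f : Finset ι → ℝ)
    (hmono : ∀ S T : Finset ι, S ⊆ T → f S ≤ f T)
    (hsub : ∀ S T : Finset ι, f (S ∪ T) + f (S ∩ T) ≤ f S + f T)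
    (hf0 : f ∅ = 0)
    (k : ℕ) (hk : 1 ≤ k)
    (S : ℕ → Finset ι) (a : ℕ → ι)
    (hS0 : S 0 = ∅)
    (hgreedy : ∀ j < k, ∀ b : ι, f (insert b (S j)) ≤ f (insert (a j) (S j)))
    (hSsucc : ∀ j < k, S (j + 1) = insert (a j) (S j)) :
    ∀ T : Finset ι, T.card = k → (1 - 1 / Real.exp 1) * f T ≤ f (S k) :=
  stmt_11_general f hmono hsub hf0 k S a hS0 hgreedy hSsucc
end

section
/- For i = 1, …, n, let F_i : [0, ∞) → ℝ be continuously differentiable with density f_i > 0, F_i(0) = 0, F_i < 1, with nondecreasing hazard rate, and suppose G_i(R) = sup_{p ≥ 0} [(1 − F_i(p)) p + F_i(p) R] is finite and attained for every R ≥ 0. For an ordering (i_1, …, i_n) of the items, define the optimal cascade revenue by R_0 = 0 and R_k = G_{i_k}(R_{k−1}) for k = 1, …, n, and write R(σ) = R_n for the ordering σ = (i_1, …, i_n). Then for any two orderings σ and τ of the same n items, R(σ) ≥ (1/2) · R(τ). In particular, for any fixed ordering, the optimal prices for that ordering generate at least half the revenue of the optimal cascade. -/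
/-!
Write `A` for the revenue of the ordering `σ`. Selling item `i` with outside option `R` gives
`G i R`, which is monotone in `R` and satisfies `R ≤ G i R` and `G i y - y ≤ G i x - x` for
`x ≤ y`. Along the cascade `σ` every suffix revenue is at most `A`, so each item's marginal gain
`G i A - A` is at most the increment it contributes in `σ`; telescoping, these gains sum to at
most `A`. Along any other cascade `τ`, one step can only raise `max R A` by the gain of its
item, since `G i R ≤ max R A + (G i A - A)`. Hence `R(τ) ≤ A + ∑ i, (G i A - A) ≤ 2 A`.
-/

open Finset

def IsOptimalRevenue (F G : ℝ → ℝ) : Prop :=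
  ∀ R ∈ Set.Ici (0 : ℝ), IsGreatest ((fun p => (1 - F p) * p + F p * R) '' Set.Ici 0) (G R)

lemma nonneg_of_hasDerivAt_of_nonneg {F f : ℝ → ℝ}
    (hF : ∀ z ∈ Set.Ici (0 : ℝ), HasDerivAt F (f z) z)
    (hf : ∀ z ∈ Set.Ici (0 : ℝ), 0 ≤ f z) (hF0 : F 0 = 0) {p : ℝ}
    (hp : p ∈ Set.Ici 0) : 0 ≤ F p := by
  have hmono : MonotoneOn F (Set.Ici 0) := by
    refine monotoneOn_of_hasDerivWithinAt_nonneg (f' := f) (convex_Ici 0)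
      (fun z hz => (hF z hz).continuousAt.continuousWithinAt) (fun z hz => ?_) (fun z hz => ?_)
    all_goals rw [interior_Ici] at hz
    · exact (hF z (Set.Ioi_subset_Ici_self hz)).hasDerivWithinAt
    · exact hf z (Set.Ioi_subset_Ici_self hz)
  simpa [hF0] using hmono Set.self_mem_Ici hp hp

namespace IsOptimalRevenue

variable {F G : ℝ → ℝ}

lemma revenue_le (hG : IsOptimalRevenue F G) {R p : ℝ} (hR : 0 ≤ R) (hp : 0 ≤ p) :
    (1 - F p) * p + F p * R ≤ G R :=
  (hG R hR).2 ⟨p, hp, rfl⟩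

lemma exists_revenue_eq (hG : IsOptimalRevenue F G) {R : ℝ} (hR : 0 ≤ R) :
    ∃ p, 0 ≤ p ∧ (1 - F p) * p + F p * R = G R := by
  obtain ⟨p, hp, hpG⟩ := (hG R hR).1
  exact ⟨p, hp, hpG⟩

/-- Pricing at the outside option itself already earns it. -/
lemma le_self (hG : IsOptimalRevenue F G) {R : ℝ} (hR : 0 ≤ R) : R ≤ G R := by
  simpa [sub_mul] using hG.revenue_le hR hR

lemma monotoneOn (hG : IsOptimalRevenue F G) (hF : ∀ p ∈ Set.Ici (0 : ℝ), 0 ≤ F p) :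
    MonotoneOn G (Set.Ici 0) := by
  intro x hx y hy hxy
  -- the price optimal against `x` earns `G x + F p * (y - x)` against `y`
  obtain ⟨p, hp, hpx⟩ := hG.exists_revenue_eq hx
  have := hG.revenue_le hy hp
  nlinarith [hF p hp]

lemma antitoneOn_sub_self (hG : IsOptimalRevenue F G)
    (hF : ∀ p ∈ Set.Ici (0 : ℝ), F p ≤ 1) : AntitoneOn (fun R => G R - R) (Set.Ici 0) := by
  intro x hx y hy hxy
  -- the price optimal against `y` earns `G y - F p * (y - x)` against `x`
  obtain ⟨p, hp, hpy⟩ := hG.exists_revenue_eq hy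
  have := hG.revenue_le hx hp
  nlinarith [hF p hp]

end IsOptimalRevenue

lemma le_add_sum_of_le_max_add {R d : ℕ → ℝ} {A : ℝ} {n : ℕ} (hR0 : R 0 ≤ A)
    (hd : ∀ k < n, 0 ≤ d k) (hstep : ∀ k < n, R (k + 1) ≤ max (R k) A + d k) :
    R n ≤ A + ∑ k ∈ range n, d k := by
  induction n with
  | zero => simpa using hR0
  | succ n ih =>
    have hR : R n ≤ A + ∑ k ∈ range n, d k :=
      ih (fun k hk => hd k (by omega)) (fun k hk => hstep k (by omega))
    have hsum : 0 ≤ ∑ k ∈ range n, d k :=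
      sum_nonneg fun k hk => hd k (Nat.lt_succ_of_lt (mem_range.1 hk))
    rw [sum_range_succ]
    linarith [hstep n (by omega), max_le hR (by linarith : A ≤ A + ∑ k ∈ range n, d k)]

section Cascade

variable {ι : Type*} {n : ℕ} {g : ι → ℝ → ℝ} {π : Fin n → ι} {R : ℕ → ℝ}

lemma cascade_nonneg (hself : ∀ i, ∀ x, 0 ≤ x → x ≤ g i x) (hR0 : R 0 = 0)
    (hR : ∀ k (hk : k < n), R (k + 1) = g (π ⟨k, hk⟩) (R k)) : ∀ k ≤ n, 0 ≤ R k := by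
  intro k hk
  induction k with
  | zero => exact hR0.ge
  | succ k ih =>
    have hRk := ih (by omega)
    rw [hR k hk]
    exact hRk.trans (hself _ _ hRk)

lemma cascade_le_last (hself : ∀ i, ∀ x, 0 ≤ x → x ≤ g i x) (hR0 : R 0 = 0)
    (hR : ∀ k (hk : k < n), R (k + 1) = g (π ⟨k, hk⟩) (R k)) {k : ℕ} (hk : k ≤ n) :
    R k ≤ R n := by
  refine monotoneOn_of_le_succ Set.ordConnected_Iic (fun a _ _ ha => ?_) (Set.mem_Iic.2 hk)
    (Set.mem_Iic.2 le_rfl) hk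
  rw [Order.succ_eq_add_one, Set.mem_Iic, Nat.add_one_le_iff] at ha
  rw [Order.succ_eq_add_one, hR a ha]
  exact hself _ _ (cascade_nonneg hself hR0 hR a ha.le)

lemma sum_gain_last_le (hself : ∀ i, ∀ x, 0 ≤ x → x ≤ g i x)
    (hsub : ∀ i, AntitoneOn (fun x => g i x - x) (Set.Ici 0)) (hR0 : R 0 = 0)
    (hR : ∀ k (hk : k < n), R (k + 1) = g (π ⟨k, hk⟩) (R k)) :
    ∑ k : Fin n, (g (π k) (R n) - R n) ≤ R n := by
  have hnonneg := cascade_nonneg hself hR0 hR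
  calc ∑ k : Fin n, (g (π k) (R n) - R n)
      ≤ ∑ k : Fin n, (R (k + 1) - R k) := by
        refine sum_le_sum fun k _ => ?_
        rw [hR k k.isLt]
        exact hsub (π k) (hnonneg k k.isLt.le) (hnonneg n le_rfl)
          (cascade_le_last hself hR0 hR k.isLt.le)
    _ = R n := by
        rw [Fin.sum_univ_eq_sum_range (fun k => R (k + 1) - R k), sum_range_sub, hR0, sub_zero]

lemma le_max_add_gain {i : ι} (hmono : MonotoneOn (g i) (Set.Ici 0))
    (hsub : AntitoneOn (fun x => g i x - x) (Set.Ici 0)) {x A : ℝ} (hx : 0 ≤ x) (hA : 0 ≤ A) :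
    g i x ≤ max x A + (g i A - A) := by
  rcases le_total x A with hxA | hAx
  · linarith [hmono hx hA hxA, le_max_right x A]
  · linarith [hsub hA hx hAx, le_max_left x A]

lemma cascade_last_le_add_sum_gain (hmono : ∀ i, MonotoneOn (g i) (Set.Ici 0))
    (hself : ∀ i, ∀ x, 0 ≤ x → x ≤ g i x)
    (hsub : ∀ i, AntitoneOn (fun x => g i x - x) (Set.Ici 0))
    (hR0 : R 0 = 0) (hR : ∀ k (hk : k < n), R (k + 1) = g (π ⟨k, hk⟩) (R k)) {A : ℝ}
    (hA : 0 ≤ A) : R n ≤ A + ∑ k : Fin n, (g (π k) A - A) := by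
  have hnonneg := cascade_nonneg hself hR0 hR
  let d : ℕ → ℝ := fun k => if hk : k < n then g (π ⟨k, hk⟩) A - A else 0
  have hd : ∑ k ∈ range n, d k = ∑ k : Fin n, (g (π k) A - A) := by
    rw [← Fin.sum_univ_eq_sum_range]
    exact sum_congr rfl fun k _ => dif_pos k.isLt
  rw [← hd]
  refine le_add_sum_of_le_max_add (by rw [hR0]; exact hA) (fun k hk => ?_) (fun k hk => ?_)
  · simpa [d, hk] using hself (π ⟨k, hk⟩) A hA
  · simpa [d, hk, hR k hk] using
      le_max_add_gain (hmono _) (hsub _) (hnonneg k hk.le) hA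

end Cascade

theorem stmt_14_general (n : ℕ) (F f : Fin n → ℝ → ℝ)
    (hderiv : ∀ i, ∀ z ∈ Set.Ici (0:ℝ), HasDerivAt (F i) (f i z) z)
    (hfpos : ∀ i, ∀ z ∈ Set.Ici (0:ℝ), 0 < f i z)
    (hF0 : ∀ i, F i 0 = 0)
    (hF1 : ∀ i, ∀ z ∈ Set.Ici (0:ℝ), F i z < 1)
    (G : Fin n → ℝ → ℝ)
    (hG : ∀ i, ∀ R ∈ Set.Ici (0:ℝ),
      IsGreatest ((fun p => (1 - F i p) * p + F i p * R) '' Set.Ici 0) (G i R))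
    (σ τ : Equiv.Perm (Fin n))
    (Rσ Rτ : ℕ → ℝ) (hRσ0 : Rσ 0 = 0) (hRτ0 : Rτ 0 = 0)
    (hRσ : ∀ k (hk : k < n), Rσ (k + 1) = G (σ ⟨k, hk⟩) (Rσ k))
    (hRτ : ∀ k (hk : k < n), Rτ (k + 1) = G (τ ⟨k, hk⟩) (Rτ k)) :
    (1 / 2) * Rτ n ≤ Rσ n := by
  have hopt : ∀ i, IsOptimalRevenue (F i) (G i) := hG
  have hF_nonneg i : ∀ p ∈ Set.Ici (0 : ℝ), 0 ≤ F i p := fun _ hp =>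
    nonneg_of_hasDerivAt_of_nonneg (hderiv i) (fun z hz => (hfpos i z hz).le) (hF0 i) hp
  have hmono i := (hopt i).monotoneOn (hF_nonneg i)
  have hself i (x : ℝ) (hx : 0 ≤ x) := (hopt i).le_self hx
  have hsub i := (hopt i).antitoneOn_sub_self fun p hp => (hF1 i p hp).le
  have hσ : ∑ i, (G i (Rσ n) - Rσ n) ≤ Rσ n := by
    simpa only [Equiv.sum_comp σ fun i => G i (Rσ n) - Rσ n] using
      sum_gain_last_le hself hsub hRσ0 hRσ
  have hτ : Rτ n ≤ Rσ n + ∑ i, (G i (Rσ n) - Rσ n) := by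
    simpa only [Equiv.sum_comp τ fun i => G i (Rσ n) - Rσ n] using
      cascade_last_le_add_sum_gain hmono hself hsub hRτ0 hRτ
        (cascade_nonneg hself hRσ0 hRσ n le_rfl)
  linarith

/-- Any fixed ordering of the items, with optimal prices for that ordering,
generates at least half the revenue of the optimal cascade. -/
theorem stmt_14 (n : ℕ) (F f : Fin n → ℝ → ℝ)
    (hderiv : ∀ i, ∀ z ∈ Set.Ici (0:ℝ), HasDerivAt (F i) (f i z) z)
    (hcont : ∀ i, ContinuousOn (f i) (Set.Ici 0))
    (hfpos : ∀ i, ∀ z ∈ Set.Ici (0:ℝ), 0 < f i z)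
    (hF0 : ∀ i, F i 0 = 0)
    (hF1 : ∀ i, ∀ z ∈ Set.Ici (0:ℝ), F i z < 1)
    (hMHR : ∀ i, ∀ x ∈ Set.Ici (0:ℝ), ∀ y ∈ Set.Ici (0:ℝ), x ≤ y →
      f i x / (1 - F i x) ≤ f i y / (1 - F i y))
    (G : Fin n → ℝ → ℝ)
    (hG : ∀ i, ∀ R ∈ Set.Ici (0:ℝ),
      IsGreatest ((fun p => (1 - F i p) * p + F i p * R) '' Set.Ici 0) (G i R))
    (σ τ : Equiv.Perm (Fin n))
    (Rσ Rτ : ℕ → ℝ) (hRσ0 : Rσ 0 = 0) (hRτ0 : Rτ 0 = 0)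
    (hRσ : ∀ k (hk : k < n), Rσ (k + 1) = G (σ ⟨k, hk⟩) (Rσ k))
    (hRτ : ∀ k (hk : k < n), Rτ (k + 1) = G (τ ⟨k, hk⟩) (Rτ k)) :
    (1 / 2) * Rτ n ≤ Rσ n :=
  stmt_14_general n F f hderiv hfpos hF0 hF1 G hG σ τ Rσ Rτ hRσ0 hRτ0 hRσ hRτ
end
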